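/- arXiv:2402.16553 — 8 statements merged into one kernel-verified Lean document; each statement's English description precedes it below -/
import Mathlib

section
/- Let A be a finite set with |A| = n, p : 2^A → ℝ≥0, and π : {1,...,n} → A a bijection with p(π(1)) ≤ ... ≤ p(π(n)), where p(j) := Σ_{S : j ∈ S} p(S). Define p' by p'({π(t),...,π(n)}) = p(π(t)) − p(π(t−1)) for each t (with p(π(0)) := 0) and p'(S) = 0 for all other nonempty sets. Then for every j ∈ A, the marginal Σ_{S : j ∈ S} p'(S) equals p(j). -/
theorem stmt2 {A : Type*} [Fintype A] [DecidableEq A]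
    (n : ℕ) (hn : 0 < n) (hcard : Fintype.card A = n)
    (p : Finset A → ℝ) (hp : ∀ S, 0 ≤ p S)
    (π : ℕ → A)
    (hinj : ∀ s < n, ∀ t < n, π s = π t → s = t)
    (hsurj : ∀ a : A, ∃ t < n, π t = a)
    (hsorted : ∀ s t : ℕ, s ≤ t → t < n →
      (∑ S ∈ Finset.univ.filter (fun S : Finset A => π s ∈ S), p S) ≤
      (∑ S ∈ Finset.univ.filter (fun S : Finset A => π t ∈ S), p S))
    (p' : Finset A → ℝ)
    (hp'tail : ∀ t < n, p' ((Finset.Ico t n).image π) =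
      (∑ S ∈ Finset.univ.filter (fun S : Finset A => π t ∈ S), p S) -
      (if t = 0 then 0
       else ∑ S ∈ Finset.univ.filter (fun S : Finset A => π (t - 1) ∈ S), p S))
    (hp'zero : ∀ S : Finset A, S ≠ ∅ →
      (∀ t < n, S ≠ (Finset.Ico t n).image π) → p' S = 0) :
    ∀ j : A,
      (∑ S ∈ Finset.univ.filter (fun S : Finset A => j ∈ S), p' S) =
      (∑ S ∈ Finset.univ.filter (fun S : Finset A => j ∈ S), p S) := by
  intro j
  obtain ⟨s, hs, rfl⟩ := hsurj j
  set T : ℕ → Finset A := fun t => (Finset.Ico t n).image π with hT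
  set m : ℕ → ℝ := fun t => ∑ S ∈ Finset.univ.filter (fun S : Finset A => π t ∈ S), p S with hm
  have hmem : ∀ t < n, (π s ∈ T t ↔ t ≤ s) := by
    intro t ht
    constructor
    · rintro h
      simp only [T, Finset.mem_image, Finset.mem_Ico] at h
      obtain ⟨u, ⟨hu1, hu2⟩, hu3⟩ := h
      have := hinj u hu2 s hs hu3
      omega
    · intro h
      exact Finset.mem_image_of_mem π (Finset.mem_Ico.mpr ⟨h, hs⟩)
  have hcA : ∀ t, t < n → (T t).card = n - t := by
    intro t ht
    rw [hT]
    rw [Finset.card_image_of_injOn, Nat.card_Ico]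
    intro x hx y hy hxy
    simp only [Finset.coe_Ico, Set.mem_Ico] at hx hy
    exact hinj x hx.2 y hy.2 hxy
  have hTinj : ∀ a ∈ Finset.range (s+1), ∀ b ∈ Finset.range (s+1), T a = T b → a = b := by
    intro a ha b hb hab
    simp only [Finset.mem_range] at ha hb
    have h1 := hcA a (by omega)
    have h2 := hcA b (by omega)
    rw [hab, h2] at h1
    omega
  have hsub : (Finset.range (s+1)).image T ⊆ Finset.univ.filter (fun S => π s ∈ S) := by
    intro S hS
    simp only [Finset.mem_image, Finset.mem_range] at hS
    obtain ⟨t, ht, rfl⟩ := hS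
    simp only [Finset.mem_filter, Finset.mem_univ, true_and]
    exact (hmem t (by omega)).mpr (by omega)
  rw [← Finset.sum_subset hsub]
  · rw [Finset.sum_image hTinj]
    have hc : ∀ t ∈ Finset.range (s+1), p' (T t) = m t - (if t = 0 then 0 else m (t-1)) := by
      intro t ht
      simp only [Finset.mem_range] at ht
      exact hp'tail t (by omega)
    rw [Finset.sum_congr rfl hc]
    show _ = m s
    have htel : ∀ k : ℕ, ∑ t ∈ Finset.range (k+1), (m t - (if t = 0 then 0 else m (t-1))) = m k := by
      intro k
      induction k with
      | zero => simp
      | succ k ih =>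
        rw [Finset.sum_range_succ, ih]
        simp
    exact htel s
  · intro S hS hS'
    simp only [Finset.mem_filter, Finset.mem_univ, true_and] at hS
    apply hp'zero S (Finset.ne_empty_of_mem hS)
    intro t ht hSt
    apply hS'
    rw [hSt] at hS ⊢
    have : t ≤ s := (hmem t ht).mp hS
    exact Finset.mem_image_of_mem T (Finset.mem_range.mpr (by omega))
end

section
/- Let A be a finite set with |A| = n, v : 2^A → ℝ≥0 a submodular function with v(∅) = 0, p : 2^A → ℝ≥0 a nonnegative set-weight function, and π : {1,...,n} → A a bijection with p(π(1)) ≤ ... ≤ p(π(n)), where p(j) := Σ_{S : j ∈ S} p(S). Define p' by p'({π(t),...,π(n)}) = p(π(t)) − p(π(t−1)) for each t (with p(π(0)) := 0), p'(∅) = Σ_S p(S) − p(π(n)), and p'(S) = 0 otherwise. Then Σ_S p'(S)·v(S) ≤ Σ_S p(S)·v(S). -/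
theorem stmt3 {A : Type*} [Fintype A] [DecidableEq A]
    (n : ℕ) (hn : 0 < n) (hcard : Fintype.card A = n)
    (v : Finset A → ℝ) (hv0 : ∀ S, 0 ≤ v S) (hvempty : v ∅ = 0)
    (hsub : ∀ S T : Finset A, S ⊆ T → ∀ a : A,
      v (insert a T) - v T ≤ v (insert a S) - v S)
    (p : Finset A → ℝ) (hp : ∀ S, 0 ≤ p S)
    (π : ℕ → A)
    (hinj : ∀ s < n, ∀ t < n, π s = π t → s = t)
    (hsurj : ∀ a : A, ∃ t < n, π t = a)
    (hsorted : ∀ s t : ℕ, s ≤ t → t < n →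
      (∑ S ∈ Finset.univ.filter (fun S : Finset A => π s ∈ S), p S) ≤
      (∑ S ∈ Finset.univ.filter (fun S : Finset A => π t ∈ S), p S))
    (p' : Finset A → ℝ)
    (hp'tail : ∀ t < n, p' ((Finset.Ico t n).image π) =
      (∑ S ∈ Finset.univ.filter (fun S : Finset A => π t ∈ S), p S) -
      (if t = 0 then 0
       else ∑ S ∈ Finset.univ.filter (fun S : Finset A => π (t - 1) ∈ S), p S))
    (hp'empty : p' ∅ = (∑ S : Finset A, p S) -
      ∑ S ∈ Finset.univ.filter (fun S : Finset A => π (n - 1) ∈ S), p S)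
    (hp'zero : ∀ S : Finset A, S ≠ ∅ →
      (∀ t < n, S ≠ (Finset.Ico t n).image π) → p' S = 0) :
    ∑ S : Finset A, p' S * v S ≤ ∑ S : Finset A, p S * v S := by
  classical
  set T : ℕ → Finset A := fun t => (Finset.Ico t n).image π with hT
  set q : ℕ → ℝ := fun t => ∑ S ∈ Finset.univ.filter (fun S : Finset A => π t ∈ S), p S with hq
  have hcardT : ∀ t, t ≤ n → (T t).card = n - t := by
    intro t ht
    rw [hT]
    simp only
    rw [Finset.card_image_of_injOn, Nat.card_Ico]
    intro s hs u hu h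
    simp only [Finset.coe_Ico, Set.mem_Ico] at hs hu
    exact hinj s hs.2 u hu.2 h
  have hTn : T n = ∅ := by
    rw [hT]; simp
  have hTne : ∀ t, t < n → T t ≠ ∅ := by
    intro t ht h
    have := hcardT t ht.le
    rw [h, Finset.card_empty] at this
    omega
  have hT0 : T 0 = Finset.univ := by
    apply Finset.eq_univ_of_forall
    intro a
    obtain ⟨t, ht, rfl⟩ := hsurj a
    exact Finset.mem_image_of_mem π (by simp [Finset.mem_Ico]; omega)
  have hTinsert : ∀ t, t < n → T t = insert (π t) (T (t + 1)) := by
    intro t ht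
    rw [hT]
    simp only
    rw [show Finset.Ico t n = insert t (Finset.Ico (t + 1) n) by
      ext x; simp [Finset.mem_Ico]; omega]
    rw [Finset.image_insert]
  have hnotmem : ∀ t, t < n → π t ∉ T (t + 1) := by
    intro t ht h
    rw [hT] at h
    simp only [Finset.mem_image, Finset.mem_Ico] at h
    obtain ⟨s, hs, h⟩ := h
    have := hinj s hs.2 t ht h
    omega
  -- Step 1 : reduce LHS to sum over tails
  have hTinjOn : ∀ s ∈ Finset.range n, ∀ t ∈ Finset.range n, T s = T t → s = t := by
    intro s hs t ht h
    simp only [Finset.mem_range] at hs ht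
    have h1 := hcardT s hs.le
    have h2 := hcardT t ht.le
    rw [h] at h1
    omega
  have key1 : ∑ S : Finset A, p' S * v S
      = ∑ t ∈ Finset.range n, p' (T t) * v (T t) := by
    have himg : ∑ S ∈ (Finset.range n).image T, p' S * v S
        = ∑ t ∈ Finset.range n, p' (T t) * v (T t) := Finset.sum_image hTinjOn
    rw [← himg]
    apply (Finset.sum_subset (Finset.subset_univ _) ?_).symm
    intro S _ hS
    simp only [Finset.mem_image, Finset.mem_range] at hS
    by_cases h : S = ∅
    · subst h; rw [hvempty, mul_zero]
    · rw [hp'zero S h, zero_mul]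
      intro t ht hEq
      exact hS ⟨t, ht, hEq.symm⟩
  -- Step 2 : value of p' on tails
  have key2 : ∀ t ∈ Finset.range n,
      p' (T t) * v (T t) = (q t - (if t = 0 then 0 else q (t - 1))) * v (T t) := by
    intro t ht
    simp only [Finset.mem_range] at ht
    rw [hp'tail t ht]
  rw [key1, Finset.sum_congr rfl key2]
  -- Step 3 : Abel summation
  obtain ⟨m, rfl⟩ : ∃ m, n = m + 1 := ⟨n - 1, by omega⟩
  have key3 : ∑ t ∈ Finset.range (m + 1), (q t - (if t = 0 then 0 else q (t - 1))) * v (T t)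
      = ∑ t ∈ Finset.range (m + 1), q t * (v (T t) - v (T (t + 1))) := by
    have e1 : ∑ t ∈ Finset.range (m + 1), (if t = 0 then (0:ℝ) else q (t - 1)) * v (T t)
        = ∑ t ∈ Finset.range m, q t * v (T (t + 1)) := by
      rw [Finset.sum_range_succ' (fun t => (if t = 0 then (0:ℝ) else q (t - 1)) * v (T t)) m]
      simp
    have e2 : ∑ t ∈ Finset.range (m + 1), q t * v (T (t + 1))
        = ∑ t ∈ Finset.range m, q t * v (T (t + 1)) := by
      rw [Finset.sum_range_succ, hTn, hvempty, mul_zero, add_zero]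
    simp only [sub_mul, mul_sub, Finset.sum_sub_distrib]
    rw [e1, e2]
  rw [key3]
  -- Step 4 : swap sums
  have key4 : ∑ t ∈ Finset.range (m + 1), q t * (v (T t) - v (T (t + 1)))
      = ∑ S : Finset A, p S *
          ∑ t ∈ Finset.range (m + 1), (if π t ∈ S then v (T t) - v (T (t + 1)) else 0) := by
    have : ∀ t, q t * (v (T t) - v (T (t + 1)))
        = ∑ S : Finset A, (if π t ∈ S then p S * (v (T t) - v (T (t + 1))) else 0) := by
      intro t
      rw [hq]
      simp only
      rw [Finset.sum_filter, Finset.sum_mul]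
      congr 1
      ext S
      split <;> ring
    simp only [this]
    rw [Finset.sum_comm]
    congr 1
    ext S
    rw [Finset.mul_sum]
    congr 1
    ext t
    split <;> ring
  rw [key4]
  -- Step 5 : per-set telescoping bound
  apply Finset.sum_le_sum
  intro S _
  apply mul_le_mul_of_nonneg_left ?_ (hp S)
  have step : ∀ t ∈ Finset.range (m + 1),
      (if π t ∈ S then v (T t) - v (T (t + 1)) else 0)
        ≤ v (S ∩ T t) - v (S ∩ T (t + 1)) := by
    intro t ht
    simp only [Finset.mem_range] at ht
    have hins := hTinsert t ht
    by_cases hmem : π t ∈ S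
    · simp only [hmem, if_true]
      have hSint : S ∩ T t = insert (π t) (S ∩ T (t + 1)) := by
        rw [hins]
        ext x
        simp only [Finset.mem_inter, Finset.mem_insert]
        constructor
        · rintro ⟨hx, hx' | hx'⟩
          · exact Or.inl hx'
          · exact Or.inr ⟨hx, hx'⟩
        · rintro (rfl | ⟨hx, hx'⟩)
          · exact ⟨hmem, Or.inl rfl⟩
          · exact ⟨hx, Or.inr hx'⟩
      rw [hSint, hins]
      exact hsub (S ∩ T (t + 1)) (T (t + 1)) Finset.inter_subset_right (π t)
    · simp only [hmem, if_false]
      have : S ∩ T t = S ∩ T (t + 1) := by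
        rw [hins]
        ext x
        simp only [Finset.mem_inter, Finset.mem_insert]
        constructor
        · rintro ⟨hx, rfl | hx'⟩
          · exact absurd hx hmem
          · exact ⟨hx, hx'⟩
        · rintro ⟨hx, hx'⟩
          exact ⟨hx, Or.inr hx'⟩
      rw [this, sub_self]
  calc ∑ t ∈ Finset.range (m + 1), (if π t ∈ S then v (T t) - v (T (t + 1)) else 0)
      ≤ ∑ t ∈ Finset.range (m + 1), (v (S ∩ T t) - v (S ∩ T (t + 1))) :=
        Finset.sum_le_sum step
    _ = v (S ∩ T 0) - v (S ∩ T (m + 1)) :=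
        Finset.sum_range_sub' (fun t => v (S ∩ T t)) (m + 1)
    _ = v S := by rw [hT0, hTn, Finset.inter_univ, Finset.inter_empty, hvempty, sub_zero]
end

section
/- Let k > 5 be prime and T ⊆ {1,...,k} with 0 < |T| < k. Consider the linear system over nonnegative reals (P_S)_{S ∈ cyclic(T)}: for all i ∈ {1,...,k}, Σ_{S ∈ cyclic(T) : i ∈ S} P_S ≥ 1/2, and Σ_{S ∈ cyclic(T)} P_S = k/(2|T|). Then the unique solution is P_S = 1/(2|T|) for all S ∈ cyclic(T). -/
/-- All cyclic shifts of a subset `T` of `ℤ/k` (identified with `Fin k`). -/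
def cyclicShifts {k : ℕ} (T : Finset (Fin k)) : Finset (Finset (Fin k)) :=
  Finset.univ.image (fun t : Fin k => T.image (fun j => j + t))

/-!
Summing the covering constraints over `i` counts each `P S` exactly `|T|` times, so their total
is `k / 2` and every constraint is tight. Then `Q t := P (T + t) - 1 / (2 |T|)` solves the circulant
system `∑ j ∈ T, Q (i - j) = 0`. Pairing it with a character `ψ` of `ℤ/k` gives
`(∑ j ∈ T, ψ j) * Q̂ ψ = 0`, and `∑ j ∈ T, ζ ^ j ≠ 0` for every `k`-th root of unity `ζ`: for `ζ`
primitive, the cyclotomic polynomial, of degree `k - 1` with all coefficients `1`, would have to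
divide the `0/1` polynomial `∑ j ∈ T, X ^ j`. Hence `Q̂ = 0` and `Q = 0`. Primality also makes the
shifts of `T` pairwise distinct, since the stabiliser of `T` is a proper subgroup of `ℤ/k`.
-/

open Finset Pointwise Polynomial

theorem Finset.vadd_finset_injective_of_prime_card {G : Type*} [AddGroup G] [Fintype G]
    [DecidableEq G] (hp : (Fintype.card G).Prime) {T : Finset G} (hT : T.Nonempty)
    (hTu : T ≠ univ) : Function.Injective (fun a : G => a +ᵥ T) := by
  have := Fact.mk (Nat.card_eq_fintype_card (α := G) ▸ hp)
  intro a b hab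
  have hmem : -b + a ∈ AddAction.stabilizer G T := by
    replace hab : a +ᵥ T = b +ᵥ T := hab
    rw [AddAction.mem_stabilizer_iff, ← vadd_vadd, hab, neg_vadd_vadd]
  rcases (AddAction.stabilizer G T).eq_bot_or_eq_top_of_prime_card with hbot | htop
  · rw [hbot, AddSubgroup.mem_bot, neg_add_eq_zero] at hmem
    exact hmem.symm
  · obtain ⟨c, hc⟩ := hT
    refine absurd (eq_univ_iff_forall.mpr fun x => ?_) hTu
    have hx : (x + -c) +ᵥ T = T := AddAction.mem_stabilizer_iff.mp (htop ▸ AddSubgroup.mem_top _)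
    rw [← hx]
    exact mem_vadd_finset.mpr ⟨c, hc, by simp⟩

theorem AddChar.eq_zero_of_forall_sum_mul_eq_zero {G : Type*} [AddCommGroup G] [Fintype G]
    {f : G → ℂ} (h : ∀ ψ : AddChar G ℂ, ∑ x, ψ x * f x = 0) : f = 0 := by
  classical
  funext u
  have key : ∑ ψ : AddChar G ℂ, ψ (-u) * ∑ x, ψ x * f x = Fintype.card G * f u := by
    simp_rw [mul_sum, ← mul_assoc, ← map_add_eq_mul]
    rw [sum_comm]
    simp_rw [← sum_mul, sum_apply_eq_ite, neg_add_eq_zero]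
    simp
  simpa [h] using key.symm

theorem eq_zero_of_forall_sum_sub_eq_zero {G : Type*} [AddCommGroup G] [Fintype G]
    {T : Finset G} (hT : ∀ ψ : AddChar G ℂ, ∑ j ∈ T, ψ j ≠ 0) {f : G → ℂ}
    (hf : ∀ i, ∑ j ∈ T, f (i - j) = 0) : f = 0 := by
  refine AddChar.eq_zero_of_forall_sum_mul_eq_zero fun ψ => ?_
  have key : ∑ i, ψ i * ∑ j ∈ T, f (i - j) = (∑ j ∈ T, ψ j) * ∑ x, ψ x * f x :=
    calc ∑ i, ψ i * ∑ j ∈ T, f (i - j) = ∑ j ∈ T, ∑ x, ψ (x + j) * f x := by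
          simp_rw [mul_sum]
          rw [sum_comm]
          exact sum_congr rfl fun j _ =>
            (Fintype.sum_equiv (Equiv.addRight j) _ _ fun x => by simp).symm
      _ = (∑ j ∈ T, ψ j) * ∑ x, ψ x * f x := by
          simp_rw [sum_mul, mul_sum, AddChar.map_add_eq_mul]
          exact sum_congr rfl fun j _ => sum_congr rfl fun x _ => by ring
  simpa [hf, hT ψ] using key.symm

theorem Polynomial.coeff_sum_X_pow_val {R : Type*} [Semiring R] {k : ℕ} (T : Finset (Fin k))
    (a : Fin k) : (∑ j ∈ T, (X : R[X]) ^ (j : ℕ)).coeff a = if a ∈ T then 1 else 0 := by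
  simp only [finsetSum_coeff, coeff_X_pow, Fin.val_inj, sum_ite_eq]

theorem IsPrimitiveRoot.sum_pow_ne_zero_of_prime {K : Type*} [Field K] [CharZero K] {k : ℕ}
    (hk : k.Prime) {ζ : K} (hζ : IsPrimitiveRoot ζ k) {T : Finset (Fin k)} (hT : T.Nonempty)
    (hTu : T ≠ univ) : ∑ j ∈ T, ζ ^ (j : ℕ) ≠ 0 := by
  have := Fact.mk hk
  intro hsum
  set f : ℚ[X] := ∑ j ∈ T, X ^ (j : ℕ) with hf_def
  have hdvd : cyclotomic k ℚ ∣ f := by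
    rw [cyclotomic_eq_minpoly_rat hζ hk.pos]
    exact minpoly.dvd ℚ ζ (by simpa [f] using hsum)
  have hdeg : f.natDegree ≤ (cyclotomic k ℚ).natDegree := by
    rw [natDegree_cyclotomic, Nat.totient_prime hk]
    exact natDegree_sum_le_of_forall_le _ _ fun j _ => (natDegree_X_pow_le _).trans (by omega)
  obtain ⟨c, hf⟩ : ∃ c, f = C c * cyclotomic k ℚ :=
    ⟨_, eq_leadingCoeff_mul_of_monic_of_dvd_of_natDegree_le (cyclotomic.monic k ℚ) hdvd hdeg⟩
  -- all coefficients of `cyclotomic k` below `k` are `1`, so those of `f` are all equal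
  have hcoeff (a : Fin k) : (if a ∈ T then 1 else 0 : ℚ) = c := by
    rw [← coeff_sum_X_pow_val, ← hf_def, hf, coeff_C_mul, cyclotomic_prime, finsetSum_coeff]
    simp [coeff_X_pow, a.isLt]
  obtain ⟨a, ha⟩ := hT
  obtain ⟨b, hb⟩ : ∃ b, b ∉ T := by simpa [eq_univ_iff_forall] using hTu
  have := (hcoeff a).trans (hcoeff b).symm
  simp [ha, hb] at this

open Fin.CommRing in
theorem AddChar.apply_fin_eq_pow {k : ℕ} [NeZero k] {M : Type*} [Monoid M]
    (ψ : AddChar (Fin k) M) (j : Fin k) : ψ j = ψ 1 ^ (j : ℕ) := by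
  rw [← map_nsmul_eq_pow, nsmul_one, Fin.cast_val_eq_self]

open Fin.CommRing in
theorem AddChar.sum_apply_ne_zero_of_prime {K : Type*} [Field K] [CharZero K] {k : ℕ} [NeZero k]
    (hk : k.Prime) (ψ : AddChar (Fin k) K) {T : Finset (Fin k)} (hT : T.Nonempty)
    (hTu : T ≠ univ) : ∑ j ∈ T, ψ j ≠ 0 := by
  rw [sum_congr rfl fun j _ => ψ.apply_fin_eq_pow j]
  by_cases h1 : ψ 1 = 1
  · simpa [h1] using hT.card_pos.ne'
  · have hroot : ψ 1 ^ k = 1 := by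
      rw [← map_nsmul_eq_pow]
      simp
    have hprim := isPrimitiveRoot_of_mem_nthRootsFinset hk
      ((Polynomial.mem_nthRootsFinset hk.pos _).mpr hroot) h1
    exact hprim.sum_pow_ne_zero_of_prime hk hT hTu

theorem Fin.eq_zero_of_forall_sum_sub_eq_zero_of_prime {k : ℕ} [NeZero k] (hk : k.Prime)
    {T : Finset (Fin k)} (hT : T.Nonempty) (hTu : T ≠ univ) {f : Fin k → ℝ}
    (hf : ∀ i, ∑ j ∈ T, f (i - j) = 0) : f = 0 := by
  have hℂ := eq_zero_of_forall_sum_sub_eq_zero (f := fun x => (f x : ℂ))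
    (fun ψ => ψ.sum_apply_ne_zero_of_prime hk hT hTu) (fun i => by exact_mod_cast hf i)
  funext x
  simpa using congr_fun hℂ x

section cyclicShifts

variable {k : ℕ} {T : Finset (Fin k)}

theorem Fin.image_add_right_injective_of_prime [NeZero k] (hk : k.Prime) (hT : T.Nonempty)
    (hTu : T ≠ univ) :
    Function.Injective (fun t : Fin k => T.image (· + t)) := by
  convert vadd_finset_injective_of_prime_card (by simpa using hk) hT hTu using 2 with t
  rw [← image_vadd]
  simp [add_comm]

theorem sum_cyclicShifts (hinj : Function.Injective (fun t : Fin k => T.image (· + t)))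
    (g : Finset (Fin k) → ℝ) : ∑ S ∈ cyclicShifts T, g S = ∑ t, g (T.image (· + t)) :=
  sum_image fun _ _ _ _ h => hinj h

theorem sum_filter_mem_cyclicShifts [NeZero k]
    (hinj : Function.Injective (fun t : Fin k => T.image (· + t)))
    (g : Finset (Fin k) → ℝ) (i : Fin k) :
    ∑ S ∈ (cyclicShifts T).filter (fun S => i ∈ S), g S = ∑ j ∈ T, g (T.image (· + (i - j))) := by
  have hfilter : univ.filter (fun t => i ∈ T.image (· + t)) = T.image (i - ·) := by
    ext t
    simp only [mem_filter, mem_univ, true_and, mem_image]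
    exact exists_congr fun j => and_congr_right fun _ => by rw [sub_eq_iff_eq_add', eq_comm]
  rw [cyclicShifts, filter_image, sum_image fun _ _ _ _ h => hinj h, hfilter,
    sum_image fun _ _ _ _ h => sub_right_injective h]

theorem sum_sum_filter_mem_cyclicShifts [NeZero k]
    (hinj : Function.Injective (fun t : Fin k => T.image (· + t))) (g : Finset (Fin k) → ℝ) :
    ∑ i, ∑ S ∈ (cyclicShifts T).filter (fun S => i ∈ S), g S
      = T.card * ∑ S ∈ cyclicShifts T, g S := by
  simp_rw [sum_filter_mem_cyclicShifts hinj, sum_cyclicShifts hinj]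
  rw [sum_comm, ← nsmul_eq_mul, ← sum_const]
  exact sum_congr rfl fun j _ => (Equiv.subRight j).sum_comp fun t => g (T.image (· + t))

end cyclicShifts

theorem stmt9_general (k : ℕ) (hk : Nat.Prime k) (T : Finset (Fin k))
    (hT0 : 0 < T.card) (hTk : T.card < k)
    (P : Finset (Fin k) → ℝ)
    (hPi : ∀ i : Fin k,
      (1 : ℝ)/2 ≤ ∑ S ∈ (cyclicShifts T).filter (fun S => i ∈ S), P S)
    (hPsum : ∑ S ∈ cyclicShifts T, P S = (k : ℝ) / (2 * (T.card : ℝ))) :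
    ∀ S ∈ cyclicShifts T, P S = 1 / (2 * (T.card : ℝ)) := by
  have := NeZero.of_pos hk.pos
  have hT : T.Nonempty := card_pos.mp hT0
  have hTu : T ≠ univ := (card_lt_iff_ne_univ T).mp (by simpa using hTk)
  have hinj := Fin.image_add_right_injective_of_prime hk hT hTu
  have htotal :
      ∑ i, ∑ S ∈ (cyclicShifts T).filter (fun S => i ∈ S), P S = ∑ _i : Fin k, (1 : ℝ) / 2 := by
    rw [sum_sum_filter_mem_cyclicShifts hinj, hPsum, sum_const, card_univ, Fintype.card_fin,
      nsmul_eq_mul]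
    field_simp
  have htight (i : Fin k) : ∑ S ∈ (cyclicShifts T).filter (fun S => i ∈ S), P S = 1 / 2 :=
    ((sum_eq_sum_iff_of_le fun i _ => hPi i).mp htotal.symm i (mem_univ i)).symm
  have hzero := Fin.eq_zero_of_forall_sum_sub_eq_zero_of_prime hk hT hTu
    (f := fun t => P (T.image (· + t)) - 1 / (2 * (T.card : ℝ))) fun i => by
      rw [sum_sub_distrib, ← sum_filter_mem_cyclicShifts hinj, htight, sum_const, nsmul_eq_mul]
      field_simp
      ring
  intro S hS
  obtain ⟨t, -, rfl⟩ := mem_image.mp hS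
  simpa [sub_eq_zero] using congr_fun hzero t

theorem stmt9 (k : ℕ) (hk : Nat.Prime k) (T : Finset (Fin k))
    (hT0 : 0 < T.card) (hTk : T.card < k)
    (P : Finset (Fin k) → ℝ)
    (hP0 : ∀ S ∈ cyclicShifts T, 0 ≤ P S)
    (hPi : ∀ i : Fin k,
      (1 : ℝ)/2 ≤ ∑ S ∈ (cyclicShifts T).filter (fun S => i ∈ S), P S)
    (hPsum : ∑ S ∈ cyclicShifts T, P S = (k : ℝ) / (2 * (T.card : ℝ))) :
    ∀ S ∈ cyclicShifts T, P S = 1 / (2 * (T.card : ℝ)) :=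
  stmt9_general k hk T hT0 hTk P hPi hPsum
end

section
/- Let k be prime with 0 < |T| < k for T ⊆ {1,...,k}. Then the k cyclic shifts T_1,...,T_k of T (where T_t := {((j+t) mod k) + 1 : j ∈ T}) are pairwise distinct, and their characteristic vectors in ℝ^k are linearly independent. -/
open Polynomial Complex

lemma aux_pow_mod {k : ℕ} {ζ : ℂ} (hζ : ζ ^ k = 1) (a b : Fin k) :
    ζ ^ ((a + b : Fin k) : ℕ) = ζ ^ (a : ℕ) * ζ ^ (b : ℕ) := by
  have h : ζ ^ ((a : ℕ) + (b : ℕ)) =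
      ζ ^ (((a : ℕ) + (b : ℕ)) % k) * (ζ ^ k) ^ (((a : ℕ) + (b : ℕ)) / k) := by
    rw [← pow_mul, ← pow_add, Nat.mod_add_div]
  rw [Fin.val_add, ← pow_add, h, hζ, one_pow, mul_one]

lemma aux_sum_ne_zero {k : ℕ} (hk : Nat.Prime k) {ζ : ℂ} (hζ : IsPrimitiveRoot ζ k)
    (T : Finset (Fin k)) (hT0 : 0 < T.card) (hTk : T.card < k) :
    (∑ j ∈ T, ζ ^ (j : ℕ)) ≠ 0 := by
  haveI : Fact (Nat.Prime k) := ⟨hk⟩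
  intro h0
  set g : ℚ[X] := ∑ j ∈ T, X ^ (j : ℕ) with hg
  have hgeval : Polynomial.aeval ζ g = 0 := by
    simp only [hg, map_sum, map_pow, Polynomial.aeval_X]
    exact h0
  have hdvd : Polynomial.cyclotomic k ℚ ∣ g := by
    rw [Polynomial.cyclotomic_eq_minpoly_rat hζ hk.pos]
    exact minpoly.dvd ℚ ζ hgeval
  obtain ⟨q, hq⟩ := hdvd
  have hcyc : (Polynomial.cyclotomic k ℚ).natDegree = k - 1 := by
    rw [Polynomial.natDegree_cyclotomic, Nat.totient_prime hk]
  have hcoeff : ∀ n : Fin k, g.coeff (n : ℕ) = if n ∈ T then 1 else 0 := by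
    intro n
    rw [hg, Polynomial.finset_sum_coeff]
    have : ∀ j ∈ T, ((X : ℚ[X]) ^ (j : ℕ)).coeff (n : ℕ)
        = if j = n then (1 : ℚ) else 0 := by
      intro j _
      rw [Polynomial.coeff_X_pow]
      congr 1
      simp [Fin.val_inj, eq_comm]
    rw [Finset.sum_congr rfl this, Finset.sum_ite_eq' T n (fun _ => (1 : ℚ))]
  have hgdeg : g.natDegree ≤ k - 1 := by
    apply Polynomial.natDegree_sum_le_of_forall_le
    intro j _
    calc ((X : ℚ[X]) ^ (j : ℕ)).natDegree ≤ (j : ℕ) := Polynomial.natDegree_X_pow_le _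
      _ ≤ k - 1 := Nat.le_sub_one_of_lt j.isLt
  obtain ⟨j₀, hj₀⟩ := Finset.card_pos.mp hT0
  have hTne : T ≠ Finset.univ := by
    intro h
    rw [h, Finset.card_univ, Fintype.card_fin] at hTk
    exact lt_irrefl _ hTk
  have hj1ex : Tᶜ.Nonempty := by
    rw [← Finset.card_pos, Finset.card_compl, Fintype.card_fin]
    omega
  obtain ⟨j₁, hj₁c⟩ := hj1ex
  have hj₁ : j₁ ∉ T := Finset.mem_compl.mp hj₁c
  rcases eq_or_ne q 0 with rfl | hqne
  · rw [mul_zero] at hq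
    have := hcoeff j₀
    rw [hq] at this
    simp [hj₀] at this
  · have hgne : g ≠ 0 := by
      rw [hq]
      exact mul_ne_zero (Polynomial.cyclotomic_ne_zero k ℚ) hqne
    have hdeg : g.natDegree = (k - 1) + q.natDegree := by
      rw [hq, Polynomial.natDegree_mul (Polynomial.cyclotomic_ne_zero k ℚ) hqne, hcyc]
    have hq0 : q.natDegree = 0 := by omega
    obtain ⟨c, rfl⟩ := Polynomial.natDegree_eq_zero.mp hq0
    have hcyccoeff : ∀ n : Fin k, (Polynomial.cyclotomic k ℚ).coeff (n : ℕ) = 1 := by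
      intro n
      rw [Polynomial.cyclotomic_prime, Polynomial.finset_sum_coeff]
      have : ∀ i ∈ Finset.range k, ((X : ℚ[X]) ^ i).coeff (n : ℕ)
          = if i = (n : ℕ) then (1 : ℚ) else 0 := by
        intro i _
        rw [Polynomial.coeff_X_pow]
        congr 1
        simp [eq_comm]
      rw [Finset.sum_congr rfl this,
        Finset.sum_ite_eq' (Finset.range k) (n : ℕ) (fun _ => (1 : ℚ))]
      simp [n.isLt]
    have hgc : ∀ n : Fin k, g.coeff (n : ℕ) = c := by
      intro n
      rw [hq, Polynomial.coeff_mul_C, hcyccoeff n, one_mul]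
    have h1 : (1 : ℚ) = c := by rw [← hgc j₀, hcoeff j₀, if_pos hj₀]
    have h2 : (0 : ℚ) = c := by rw [← hgc j₁, hcoeff j₁, if_neg hj₁]
    rw [← h2] at h1
    exact one_ne_zero h1

theorem stmt10 (k : ℕ) (hk : Nat.Prime k) (T : Finset (Fin k))
    (hT0 : 0 < T.card) (hTk : T.card < k) :
    Function.Injective (fun t : Fin k => T.image (fun j => j + t)) ∧
    LinearIndependent ℝ (fun t : Fin k => (fun i : Fin k =>
      if i ∈ T.image (fun j => j + t) then (1 : ℝ) else 0)) := by
  have hk0 : k ≠ 0 := hk.ne_zero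
  set ω : ℂ := Complex.exp (2 * Real.pi * Complex.I / k) with hω
  have hωprim : IsPrimitiveRoot ω k := Complex.isPrimitiveRoot_exp k hk0
  have hLI : LinearIndependent ℝ (fun t : Fin k => (fun i : Fin k =>
      if i ∈ T.image (fun j => j + t) then (1 : ℝ) else 0)) := by
    rw [Fintype.linearIndependent_iff]
    intro c hc t₀
    -- pointwise relation
    have hci : ∀ i : Fin k,
        (∑ t : Fin k, c t * (if i ∈ T.image (fun j => j + t) then (1 : ℝ) else 0)) = 0 := by
      intro i
      have := congrFun hc i
      simpa [Finset.sum_apply] using this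
    set Q : ℂ[X] := ∑ t : Fin k, Polynomial.C ((c t : ℂ)) * X ^ (t : ℕ) with hQ
    have hQeval : ∀ s : Fin k, Q.eval (ω ^ (s : ℕ)) = 0 := by
      intro s
      set ζ : ℂ := ω ^ (s : ℕ) with hζdef
      have hζk : ζ ^ k = 1 := by
        rw [hζdef, ← pow_mul, mul_comm, pow_mul, hωprim.pow_eq_one, one_pow]
      have hS : (∑ j ∈ T, ζ ^ (j : ℕ)) ≠ 0 := by
        rcases eq_or_ne (s : ℕ) 0 with hs | hs
        · simp only [hζdef, hs, pow_zero, one_pow]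
          rw [Finset.sum_const, nsmul_eq_mul, mul_one]
          exact Nat.cast_ne_zero.mpr (by omega)
        · have hcop : Nat.Coprime (s : ℕ) k := by
            rw [Nat.coprime_comm]
            exact (Nat.Prime.coprime_iff_not_dvd hk).mpr
              (Nat.not_dvd_of_pos_of_lt (Nat.pos_of_ne_zero hs) s.isLt)
          exact aux_sum_ne_zero hk (hωprim.pow_of_coprime (s : ℕ) hcop) T hT0 hTk
      -- main computation
      have hev : Q.eval ζ = ∑ t : Fin k, (c t : ℂ) * ζ ^ (t : ℕ) := by
        rw [hQ, Polynomial.eval_finset_sum]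
        simp
      have step1 : ∀ t : Fin k,
          (∑ j ∈ T, ζ ^ (j : ℕ)) * ((c t : ℂ) * ζ ^ (t : ℕ))
          = (c t : ℂ) * ∑ i ∈ T.image (fun j => j + t), ζ ^ (i : ℕ) := by
        intro t
        rw [Finset.sum_image (fun a _ b _ h => by exact add_right_cancel h)]
        rw [Finset.sum_congr rfl (fun j _ => aux_pow_mod hζk j t), ← Finset.sum_mul]
        ring
      have hAB : ∀ (A : Finset (Fin k)), (∑ i ∈ A, ζ ^ (i : ℕ))
          = ∑ i : Fin k, (if i ∈ A then (1 : ℂ) else 0) * ζ ^ (i : ℕ) := by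
        intro A
        have h2 := Finset.sum_ite_mem Finset.univ A (fun i : Fin k => ζ ^ (i : ℕ))
        rw [Finset.univ_inter] at h2
        rw [← h2]
        exact Finset.sum_congr rfl fun i _ => by split <;> simp
      have inner : ∀ i : Fin k, (∑ t : Fin k,
          (c t : ℂ) * (if i ∈ T.image (fun j => j + t) then (1 : ℂ) else 0)) = 0 := by
        intro i
        have hcast : ((∑ t : Fin k, c t *
            (if i ∈ T.image (fun j => j + t) then (1 : ℝ) else 0) : ℝ) : ℂ)
            = ∑ t : Fin k, (c t : ℂ) *
              (if i ∈ T.image (fun j => j + t) then (1 : ℂ) else 0) := by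
          push_cast
          exact Finset.sum_congr rfl fun t _ => by split <;> simp
        rw [← hcast, hci i, Complex.ofReal_zero]
      have hmain : (∑ j ∈ T, ζ ^ (j : ℕ)) * Q.eval ζ = 0 := by
        calc (∑ j ∈ T, ζ ^ (j : ℕ)) * Q.eval ζ
            = ∑ t : Fin k, (c t : ℂ) * ∑ i ∈ T.image (fun j => j + t), ζ ^ (i : ℕ) := by
              rw [hev, Finset.mul_sum]
              exact Finset.sum_congr rfl fun t _ => step1 t
          _ = ∑ t : Fin k, ∑ i : Fin k, (c t : ℂ) *
              ((if i ∈ T.image (fun j => j + t) then (1 : ℂ) else 0) * ζ ^ (i : ℕ)) := by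
              refine Finset.sum_congr rfl fun t _ => ?_
              rw [hAB, Finset.mul_sum]
          _ = ∑ i : Fin k, (∑ t : Fin k, (c t : ℂ) *
              (if i ∈ T.image (fun j => j + t) then (1 : ℂ) else 0)) * ζ ^ (i : ℕ) := by
              rw [Finset.sum_comm]
              refine Finset.sum_congr rfl fun i _ => ?_
              rw [Finset.sum_mul]
              exact Finset.sum_congr rfl fun t _ => (mul_assoc _ _ _).symm
          _ = 0 := by
              refine Finset.sum_eq_zero fun i _ => ?_
              rw [inner i, zero_mul]
      rcases mul_eq_zero.mp hmain with h | h
      · exact absurd h hS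
      · exact h
    have hQ0 : Q = 0 := by
      apply Polynomial.eq_zero_of_natDegree_lt_card_of_eval_eq_zero Q
        (f := fun s : Fin k => ω ^ (s : ℕ))
        (fun s s' h => Fin.ext (hωprim.pow_inj s.isLt s'.isLt h)) hQeval
      have : Q.natDegree ≤ k - 1 := by
        apply Polynomial.natDegree_sum_le_of_forall_le
        intro t _
        exact (Polynomial.natDegree_C_mul_X_pow_le _ _).trans (Nat.le_sub_one_of_lt t.isLt)
      rw [Fintype.card_fin]
      omega
    have : Q.coeff (t₀ : ℕ) = (c t₀ : ℂ) := by
      rw [hQ, Polynomial.finset_sum_coeff]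
      have : ∀ t : Fin k, (Polynomial.C ((c t : ℂ)) * X ^ (t : ℕ)).coeff (t₀ : ℕ)
          = if t₀ = t then (c t : ℂ) else 0 := by
        intro t
        rw [Polynomial.coeff_C_mul, Polynomial.coeff_X_pow]
        by_cases h : t₀ = t <;> simp [h, Fin.val_inj]
      rw [Finset.sum_congr rfl (fun t _ => this t),
        Finset.sum_ite_eq Finset.univ t₀ (fun t => (c t : ℂ))]
      simp
    rw [hQ0, Polynomial.coeff_zero] at this
    exact_mod_cast this.symm
  constructor
  · intro t t' h
    apply hLI.injective
    funext i
    simp only [h]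
  · exact hLI
end

section
/- For every n ≥ 2, consider the instance with actions {⊥, 1, ..., n−1}, f(⊥)=0, c(⊥)=0, f(i)=2^{i+1}/2^n, c(i)=(2^{i+1}−i−1)/2^n for i ∈ {1,...,n−1}, and inspection cost v(S)=|S|·n/2^n. Every deterministic incentive-compatible inspection scheme yields principal's utility at most 2/2^n, while the randomized incentive-compatible scheme suggesting action n−1 with α = 1 − n/2^n and inspecting {n−1} with probability 1/2 (∅ otherwise) yields principal's utility n/2^{n+1}. Hence the ratio between the optimal randomized and optimal deterministic inspection scheme utility is at least n/4. -/
/-!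
Multiply all quantities by `2 ^ n` and write `β = 1 - α`. Under full payment action `i ≥ 1` gives the
agent `i + 1 - β 2^(i+1)`, so incentive compatibility against the null action forces
`β 2^(i+1) ≤ i + 1`, and against an uninspected action `j` with `1 ≤ j < i` it forces
`β 2^i ≤ i - j`. If `i` is inspected, the inspection already costs at least `n ≥ i + 1`. Otherwise,
among the `|S| + 1` actions just below `i` one is uninspected, so `β 2^(i+1) ≤ 2 |S| + 2 ≤ |S| n + 2`:
every extra unit of incentive has to be paid for with an inspection, and inspections cost `n`.
The randomized scheme halves the deviation payoffs instead, which costs only `n / 2`.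
-/

open Finset

/-- `reward n j` and `cost n j` are `f` and `c` of the instance; the action `0` plays the role of `⊥`. -/
noncomputable def reward (n j : ℕ) : ℝ := if j = 0 then 0 else 2 ^ (j + 1) / 2 ^ n

noncomputable def cost (n j : ℕ) : ℝ := if j = 0 then 0 else (2 ^ (j + 1) - j - 1) / 2 ^ n

def IsDeterministicIC {ι : Type*} [DecidableEq ι] (f c : ι → ℝ) (i : ι) (α : ℝ)
    (S : Finset ι) : Prop :=
  ∀ j, (if j = i then α * f i - c i
    else α * f j * (if i ∈ S ∨ j ∈ S then 0 else 1) - c j) ≤ α * f i - c i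

theorem Fin.exists_notMem_Ico_of_card_lt {n a b : ℕ} (S : Finset (Fin n)) (hb : b ≤ n)
    (h : #S < b - a) : ∃ j : Fin n, a ≤ j ∧ (j : ℕ) < b ∧ j ∉ S := by
  obtain ⟨m, hm, hmS⟩ := exists_mem_notMem_of_card_lt_card
    (s := S.map Fin.valEmbedding) (t := Ico a b) (by simpa using h)
  rw [mem_Ico] at hm
  exact ⟨⟨m, by omega⟩, hm.1, hm.2, fun hS => hmS (mem_map_of_mem Fin.valEmbedding hS)⟩

section Instance

variable {n : ℕ}

theorem mul_reward_sub_cost {j : ℕ} (hj : j ≠ 0) (α : ℝ) :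
    α * reward n j - cost n j = ((j : ℝ) + 1 - (1 - α) * 2 ^ (j + 1)) / 2 ^ n := by
  simp only [reward, cost, if_neg hj]
  ring

theorem reward_pred (hn : 2 ≤ n) : reward n (n - 1) = 1 := by
  rw [reward, if_neg (by omega), Nat.sub_add_cancel (by omega), div_self (by positivity)]

theorem cost_pred (hn : 2 ≤ n) : cost n (n - 1) = 1 - n / 2 ^ n := by
  rw [cost, if_neg (by omega), Nat.sub_add_cancel (by omega), Nat.cast_sub (by omega)]
  field_simp
  ring

theorem mul_reward_half_sub_cost_nonpos {α : ℝ} (hα : α ≤ 1) (j : ℕ) :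
    α * reward n j * (1 - 1 / 2) - cost n j ≤ 0 := by
  rcases eq_or_ne j 0 with rfl | hj
  · simp [reward, cost]
  simp only [reward, cost, if_neg hj]
  have hj_succ_le : (j : ℝ) + 1 ≤ 2 ^ j := by exact_mod_cast Nat.lt_two_pow_self
  have hαpow : α * 2 ^ j ≤ 2 ^ j := mul_le_of_le_one_left (by positivity) hα
  calc α * (2 ^ (j + 1) / 2 ^ n) * (1 - 1 / 2) - (2 ^ (j + 1) - j - 1) / 2 ^ n
      = (α * 2 ^ j - 2 * 2 ^ j + j + 1) / 2 ^ n := by ring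
    _ ≤ 0 := div_nonpos_of_nonpos_of_nonneg (by linarith) (by positivity)

variable {i : Fin n} {α : ℝ} {S : Finset (Fin n)}
  (hIC : IsDeterministicIC (fun j : Fin n => reward n j) (fun j => cost n j) i α S)
include hIC

theorem IsDeterministicIC.le_succ (hi : (i : ℕ) ≠ 0) :
    (1 - α) * 2 ^ ((i : ℕ) + 1) ≤ (i : ℕ) + 1 := by
  have h := hIC ⟨0, i.pos⟩
  rw [if_neg (fun h0 => hi (congrArg Fin.val h0).symm)] at h
  have h_null : reward n 0 = 0 ∧ cost n 0 = 0 := ⟨if_pos rfl, if_pos rfl⟩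
  simp only [h_null, mul_zero, zero_mul, sub_zero] at h
  rw [mul_reward_sub_cost hi, le_div_iff₀ (by positivity), zero_mul] at h
  linarith

theorem IsDeterministicIC.le_sub_of_notMem {j : Fin n} (hα : α ≤ 1) (hiS : i ∉ S)
    (hjS : j ∉ S) (hj : (j : ℕ) ≠ 0) (hji : j < i) :
    (1 - α) * 2 ^ (i : ℕ) ≤ (i : ℕ) - (j : ℕ) := by
  have h := hIC j
  rw [if_neg hji.ne, if_neg (by tauto), mul_one, mul_reward_sub_cost hj,
    mul_reward_sub_cost (by omega : (i : ℕ) ≠ 0), div_le_div_iff_of_pos_right (by positivity)] at h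
  have hpow : (2 : ℝ) ^ ((j : ℕ) + 1) ≤ 2 ^ (i : ℕ) :=
    pow_le_pow_right₀ one_le_two (by simpa using hji)
  have := mul_le_mul_of_nonneg_left hpow (sub_nonneg.2 hα)
  rw [pow_succ (2 : ℝ) (i : ℕ)] at h
  linarith

theorem IsDeterministicIC.scaled_surplus_le (hn : 2 ≤ n) (hα : α ≤ 1)
    (hi : (i : ℕ) ≠ 0) : (1 - α) * 2 ^ ((i : ℕ) + 1) ≤ #S * n + 2 := by
  have hnull := hIC.le_succ hi
  have hn' : (2 : ℝ) ≤ n := by exact_mod_cast hn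
  by_cases hiS : i ∈ S
  · have hcard : (1 : ℝ) ≤ #S := by exact_mod_cast card_pos.2 ⟨i, hiS⟩
    have hin : ((i : ℕ) : ℝ) + 1 ≤ n := by exact_mod_cast i.isLt
    nlinarith
  suffices (1 - α) * 2 ^ ((i : ℕ) + 1) ≤ 2 * #S + 2 by
    nlinarith [(Nat.cast_nonneg #S : (0 : ℝ) ≤ #S)]
  by_cases hclose : (i : ℕ) ≤ #S + 1
  · have : ((i : ℕ) : ℝ) ≤ #S + 1 := by exact_mod_cast hclose
    linarith
  -- the `#S + 1` actions just below `i` cannot all be inspected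
  obtain ⟨j, hj_ge, hj_lt, hjS⟩ :=
    Fin.exists_notMem_Ico_of_card_lt (a := i - 1 - #S) (b := i) S i.isLt.le (by omega)
  have hgap := hIC.le_sub_of_notMem hα hiS hjS (by omega) hj_lt
  have : ((i : ℕ) : ℝ) - (j : ℕ) ≤ #S + 1 := by
    rw [sub_le_iff_le_add]; exact_mod_cast (by omega : (i : ℕ) ≤ #S + 1 + j)
  rw [pow_succ]
  linarith

theorem IsDeterministicIC.principal_utility_le (hn : 2 ≤ n) (hα : α ≤ 1) :
    (1 - α) * reward n i - #S * n / 2 ^ n ≤ 2 / 2 ^ n := by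
  rcases eq_or_ne (i : ℕ) 0 with hi | hi
  · have hv : (0 : ℝ) ≤ #S * n / 2 ^ n := by positivity
    have h2 : (0 : ℝ) ≤ 2 / 2 ^ n := by positivity
    rw [reward, if_pos hi, mul_zero]
    linarith
  rw [reward, if_neg hi, mul_div_assoc', div_sub_div_same]
  gcongr
  linarith [hIC.scaled_surplus_le hn hα hi]

end Instance

theorem stmt11 (n : ℕ) (hn : 2 ≤ n) :
    let f : Fin n → ℝ := fun j => if (j : ℕ) = 0 then 0 else 2 ^ ((j : ℕ) + 1) / 2 ^ n
    let c : Fin n → ℝ := fun j =>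
      if (j : ℕ) = 0 then 0 else (2 ^ ((j : ℕ) + 1) - (j : ℕ) - 1) / 2 ^ n
    let v : Finset (Fin n) → ℝ := fun S => (S.card : ℝ) * n / 2 ^ n
    let last : Fin n := ⟨n - 1, by omega⟩
    -- every deterministic IC inspection scheme yields utility at most 2/2^n
    (∀ (i : Fin n) (α : ℝ) (S : Finset (Fin n)), α ∈ Set.Icc (0 : ℝ) 1 →
      (∀ j : Fin n,
        (if j = i then α * f i - c i
         else α * f j * (if i ∈ S ∨ j ∈ S then 0 else 1) - c j) ≤ α * f i - c i) →
      (1 - α) * f i - v S ≤ 2 / 2 ^ n)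
    -- the randomized scheme (last, 1 - n/2^n, {inspect {last} w.p. 1/2, ∅ w.p. 1/2}) is IC
    ∧ (∀ j : Fin n,
        (if j = last then (1 - (n : ℝ) / 2 ^ n) * f last - c last
         else (1 - (n : ℝ) / 2 ^ n) * f j * (1 - 1/2) - c j)
        ≤ (1 - (n : ℝ) / 2 ^ n) * f last - c last)
    -- and yields principal's utility n/2^(n+1)
    ∧ (1 - (1 - (n : ℝ) / 2 ^ n)) * f last - (1/2) * v {last} = (n : ℝ) / 2 ^ (n + 1)
    -- hence the randomized/deterministic gap is at least n/4
    ∧ (n : ℝ) / 2 ^ (n + 1) = ((n : ℝ) / 4) * (2 / 2 ^ n) := by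
  intro f c v last
  have hf_last : f last = 1 := reward_pred hn
  have hc_last : c last = 1 - n / 2 ^ n := cost_pred hn
  refine ⟨fun i α S hα hIC => IsDeterministicIC.principal_utility_le hIC hn hα.2,
    fun j => ?_, ?_, by field_simp; ring⟩
  · split_ifs
    · exact le_rfl
    · rw [hf_last, hc_last, mul_one, sub_self]
      exact mul_reward_half_sub_cost_nonpos (sub_le_self 1 (by positivity)) j
  · simp only [hf_last, v, card_singleton]
    field_simp
    ring
end

section
/- In the instance with n ≥ 2 actions {⊥,1,...,n−1}, f(j)=2^{j+1}/2^n and c(j)=(2^{j+1}−j−1)/2^n for j ≥ 1, f(⊥)=c(⊥)=0, and no inspection: if contract α ∈ [0,1] incentivizes the agent to take action j ≥ 1 (i.e., α·f(j) − c(j) ≥ α·f(ℓ) − c(ℓ) for all ℓ, including ℓ = j−1 if j ≥ 2, with action 0 interpreted as ⊥), then α ≥ 1 − 1/2^j, and hence the principal's utility (1−α)·f(j) is at most 2/2^n. -/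
/-!
Moving from action `j - 1` up to action `j` changes the agent's payoff by
`(2^j α - (2^j - 1)) / 2^n` (by `2 (2α - 1) / 2^n` when `j = 1` and the deviation is to `⊥`),
so an agent who prefers `j` to `j - 1` forces `1 - α ≤ 2^{-j}`, and the principal keeps at most
`2^{-j} · 2^{j+1} / 2^n = 2 / 2^n`.
-/

namespace NoInspectionInstance

/-- Action `0` stands for `⊥`. -/
noncomputable def output (n k : ℕ) : ℝ := if k = 0 then 0 else 2 ^ (k + 1) / 2 ^ n

noncomputable def cost (n k : ℕ) : ℝ := if k = 0 then 0 else (2 ^ (k + 1) - k - 1) / 2 ^ n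

noncomputable def agentUtility (n : ℕ) (α : ℝ) (k : ℕ) : ℝ := α * output n k - cost n k

theorem agentUtility_one_sub_agentUtility_zero (n : ℕ) (α : ℝ) :
    agentUtility n α 1 - agentUtility n α 0 = 2 * (2 * α - 1) / 2 ^ n := by
  simp only [agentUtility, output, cost]
  norm_num
  ring

theorem agentUtility_succ_sub_agentUtility {k : ℕ} (hk : 1 ≤ k) (n : ℕ) (α : ℝ) :
    agentUtility n α (k + 1) - agentUtility n α k =
      (2 ^ (k + 1) * α - (2 ^ (k + 1) - 1)) / 2 ^ n := by
  simp only [agentUtility, output, cost, Nat.add_one_ne_zero, Nat.one_le_iff_ne_zero.mp hk,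
    if_false]
  push_cast
  ring

theorem two_pow_sub_one_le_mul_of_agentUtility_pred_le {n k : ℕ} {α : ℝ} (hk : 1 ≤ k)
    (h : agentUtility n α (k - 1) ≤ agentUtility n α k) : 2 ^ k - 1 ≤ 2 ^ k * α := by
  obtain ⟨k, rfl⟩ := Nat.exists_eq_add_of_le' hk
  rw [Nat.add_sub_cancel, ← sub_nonneg] at h
  have h2n : (0 : ℝ) < 2 ^ n := by positivity
  rcases Nat.eq_zero_or_pos k with rfl | hk
  · rw [agentUtility_one_sub_agentUtility_zero, le_div_iff₀ h2n] at h
    norm_num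
    linarith
  · rw [agentUtility_succ_sub_agentUtility hk, le_div_iff₀ h2n] at h
    linarith

theorem one_sub_inv_two_pow_le {k : ℕ} {α : ℝ} (h : 2 ^ k - 1 ≤ 2 ^ k * α) :
    1 - 1 / 2 ^ k ≤ α := by
  have h2k : (0 : ℝ) < 2 ^ k := by positivity
  rw [sub_le_comm, le_div_iff₀ h2k]
  linarith

theorem one_sub_mul_output_le {n k : ℕ} {α : ℝ} (hk : 1 ≤ k) (h : 2 ^ k - 1 ≤ 2 ^ k * α) :
    (1 - α) * output n k ≤ 2 / 2 ^ n := by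
  rw [output, if_neg (Nat.one_le_iff_ne_zero.mp hk), ← mul_div_assoc,
    div_le_div_iff_of_pos_right (by positivity), pow_succ]
  linarith

end NoInspectionInstance

theorem stmt12_general (n : ℕ) :
    let f : Fin n → ℝ := fun j => if (j : ℕ) = 0 then 0 else 2 ^ ((j : ℕ) + 1) / 2 ^ n
    let c : Fin n → ℝ := fun j =>
      if (j : ℕ) = 0 then 0 else (2 ^ ((j : ℕ) + 1) - (j : ℕ) - 1) / 2 ^ n
    ∀ α ∈ Set.Icc (0 : ℝ) 1, ∀ j : Fin n, 1 ≤ (j : ℕ) →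
      (∀ ℓ : Fin n, α * f ℓ - c ℓ ≤ α * f j - c j) →
      1 - 1 / 2 ^ (j : ℕ) ≤ α ∧ (1 - α) * f j ≤ 2 / 2 ^ n := by
  intro f c α _ j hj hbest
  have hgain : 2 ^ (j : ℕ) - 1 ≤ 2 ^ (j : ℕ) * α :=
    NoInspectionInstance.two_pow_sub_one_le_mul_of_agentUtility_pred_le hj
      (hbest ⟨j - 1, by omega⟩)
  exact ⟨NoInspectionInstance.one_sub_inv_two_pow_le hgain,
    NoInspectionInstance.one_sub_mul_output_le hj hgain⟩

theorem stmt12 (n : ℕ) (hn : 2 ≤ n) :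
    let f : Fin n → ℝ := fun j => if (j : ℕ) = 0 then 0 else 2 ^ ((j : ℕ) + 1) / 2 ^ n
    let c : Fin n → ℝ := fun j =>
      if (j : ℕ) = 0 then 0 else (2 ^ ((j : ℕ) + 1) - (j : ℕ) - 1) / 2 ^ n
    ∀ α ∈ Set.Icc (0 : ℝ) 1, ∀ j : Fin n, 1 ≤ (j : ℕ) →
      (∀ ℓ : Fin n, α * f ℓ - c ℓ ≤ α * f j - c j) →
      1 - 1 / 2 ^ (j : ℕ) ≤ α ∧ (1 - α) * f j ≤ 2 / 2 ^ n :=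
  stmt12_general n
end

section
/- For every instance (A, c, f, v) with monotone v, every deterministic non-incentive-compatible inspection scheme (j, α, S) whose agent best response is i ≠ j admits a deterministic incentive-compatible inspection scheme achieving at least the same principal's utility. Specifically: if {i,j} ∩ S ≠ ∅ then (i, 0, S) is incentive-compatible with best response i and yields at least the same utility; if {i,j} ∩ S = ∅ then (i, α, S) is incentive-compatible with best response i and yields the same utility. -/
theorem stmt14 {A : Type*} [Fintype A] [DecidableEq A]
    (f c : A → ℝ) (v : Finset A → ℝ)
    (hvmono : ∀ S T : Finset A, S ⊆ T → v S ≤ v T)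
    (hc : ∀ a, 0 ≤ c a) (bot : A) (hcbot : c bot = 0) (hfbot : 0 ≤ f bot)
    (j i : A) (hij : i ≠ j) (α : ℝ) (hα : 0 ≤ α) (S : Finset A) :
    -- agent's utility under deterministic scheme (sug, β, S) from taking ℓ
    let uA : A → ℝ → A → ℝ := fun sug β ℓ =>
      if ℓ = sug then β * f sug - c sug
      else (if sug ∈ S ∨ ℓ ∈ S then 0 else β * f ℓ) - c ℓ
    -- principal's utility under scheme (sug, β, S) when the agent takes ℓ
    let uP : A → ℝ → A → ℝ := fun sug β ℓ =>
      (1 - β * (if ℓ = sug ∨ ¬(sug ∈ S ∨ ℓ ∈ S) then 1 else 0)) * f ℓ - v S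
    -- if i is a best response to the (non-IC) scheme (j, α, S) ...
    (∀ ℓ : A, uA j α ℓ ≤ uA j α i) →
    -- ... then an IC scheme with best response i does at least as well
    ((j ∈ S ∨ i ∈ S) →
        (∀ ℓ : A, uA i 0 ℓ ≤ uA i 0 i) ∧ uP j α i ≤ uP i 0 i)
    ∧ (¬(j ∈ S ∨ i ∈ S) →
        (∀ ℓ : A, uA i α ℓ ≤ uA i α i) ∧ uP i α i = uP j α i) := by
  intro uA uP hbr
  have hbot : (0:ℝ) ≤ uA j α bot := by
    simp only [uA]
    by_cases hbj : bot = j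
    · subst hbj; simp [hcbot]; positivity
    · simp [hbj, hcbot]
      split <;> positivity
  constructor
  · intro hmem
    have hiS : uA j α i = -c i := by
      simp [uA, hij, hmem]
    have hci : c i = 0 := by
      have := le_trans hbot (hbr bot)
      rw [hiS] at this
      linarith [hc i]
    constructor
    · intro ℓ
      simp only [uA]
      by_cases hl : ℓ = i
      · simp [hl]
      · simp [hl, hci]
        exact hc ℓ
    · have hnot : ¬(j ∉ S ∧ i ∉ S) := by tauto
      simp [uP, hij, hnot]
  · intro hmem
    push_neg at hmem
    constructor
    · intro ℓ
      have h1 : uA i α i = uA j α i := by simp [uA, hij, hmem.1, hmem.2]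
      by_cases hl : ℓ = i
      · simp [hl]
      · have h2 : uA i α ℓ = uA j α ℓ := by
          by_cases hlj : ℓ = j
          · simp only [uA]
            simp [hl, hlj, hmem.1, hmem.2, Ne.symm hij]
          · simp only [uA]
            simp [hl, hlj, hmem.1, hmem.2]
        rw [h2, h1]; exact hbr ℓ
    · simp [uP, hij, hmem.1, hmem.2]
end

section
/- Let A be a finite set, i ∈ A, and v : 2^A → ℝ≥0 monotone. For any inspection distribution p over 2^A, define p' by p'({i}) = Σ_{S : i ∈ S} p(S), p'(S) = 0 for S ∋ i with S ≠ {i}, and p'(S) = p(S) for S ∌ i. Then for every j ∈ A \ {i}: Σ_{S : {i,j} ∩ S ≠ ∅} p(S) = Σ_{S : {i,j} ∩ S ≠ ∅} p'(S), and consequently the agent's utility from every action is identical under (i, α, p) and (i, α, p'), while the expected inspection cost satisfies Σ_S p'(S)·v(S) ≤ Σ_S p(S)·v(S). -/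
open Finset

/-!
Moving all the inspection mass of sets containing `i` onto `{i}` leaves, for every `j`, the
probability that `i` or `j` is inspected unchanged: the sets containing `i` keep their total
mass, and the sets avoiding `i` keep their individual masses. The expected cost can only drop,
since `v {i} ≤ v S` whenever `i ∈ S`.
-/

theorem sum_filter_or_eq_of_sum_filter_eq {ι M : Type*} [AddCommMonoid M] (s : Finset ι)
    (P Q : ι → Prop) [DecidablePred P] [DecidablePred Q] {q q' : ι → M}
    (hP : ∑ x ∈ s.filter P, q x = ∑ x ∈ s.filter P, q' x)
    (hnP : ∀ x ∈ s, ¬ P x → q x = q' x) :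
    ∑ x ∈ s.filter (fun x => P x ∨ Q x), q x = ∑ x ∈ s.filter (fun x => P x ∨ Q x), q' x := by
  have hsplit : ∀ r : ι → M, ∑ x ∈ s.filter (fun x => P x ∨ Q x), r x =
      ∑ x ∈ s.filter P, r x + ∑ x ∈ s.filter (fun x => ¬ P x ∧ Q x), r x := by
    intro r
    rw [← sum_filter_add_sum_filter_not (s.filter fun x => P x ∨ Q x) P, filter_filter,
      filter_filter]
    congr 2 <;> ext x <;> simp only [mem_filter] <;> tauto
  rw [hsplit q, hsplit q', hP]
  exact congrArg _ (sum_congr rfl fun x hx => hnP x (mem_filter.1 hx).1 (mem_filter.1 hx).2.1)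

section

variable {A : Type*} [Fintype A] [DecidableEq A] {i : A}

theorem sum_filter_mem_eq_apply_singleton {M : Type*} [AddCommMonoid M] {q : Finset A → M}
    (hq : ∀ S : Finset A, i ∈ S → S ≠ {i} → q S = 0) :
    ∑ S ∈ univ.filter (fun S : Finset A => i ∈ S), q S = q {i} :=
  sum_eq_single_of_mem {i} (by simp) fun S hS hne => hq S (mem_filter.1 hS).2 hne

theorem sum_mul_le_of_collapse {v p p' : Finset A → ℝ} (hv : Monotone v) (hp0 : ∀ S, 0 ≤ p S)
    (hp'i : p' {i} = ∑ S ∈ univ.filter (fun S : Finset A => i ∈ S), p S)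
    (hp'0 : ∀ S : Finset A, i ∈ S → S ≠ {i} → p' S = 0)
    (hp'e : ∀ S : Finset A, i ∉ S → p' S = p S) :
    ∑ S, p' S * v S ≤ ∑ S, p S * v S := by
  have hin : ∑ S ∈ univ.filter (fun S : Finset A => i ∈ S), p' S * v S ≤
      ∑ S ∈ univ.filter (fun S : Finset A => i ∈ S), p S * v S :=
    calc ∑ S ∈ univ.filter (fun S : Finset A => i ∈ S), p' S * v S
        = p' {i} * v {i} :=
          sum_filter_mem_eq_apply_singleton fun S hi hS => by rw [hp'0 S hi hS, zero_mul]
      _ = ∑ S ∈ univ.filter (fun S : Finset A => i ∈ S), p S * v {i} := by rw [hp'i, sum_mul]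
      _ ≤ ∑ S ∈ univ.filter (fun S : Finset A => i ∈ S), p S * v S :=
          sum_le_sum fun S hS => mul_le_mul_of_nonneg_left
            (hv (singleton_subset_iff.2 (mem_filter.1 hS).2)) (hp0 S)
  have hout : ∑ S ∈ univ.filter (fun S : Finset A => i ∉ S), p' S * v S =
      ∑ S ∈ univ.filter (fun S : Finset A => i ∉ S), p S * v S :=
    sum_congr rfl fun S hS => by rw [hp'e S (mem_filter.1 hS).2]
  rw [← sum_filter_add_sum_filter_not univ (fun S => i ∈ S),
    ← sum_filter_add_sum_filter_not univ (fun S => i ∈ S) (fun S => p S * v S)]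
  exact add_le_add hin hout.le

end

theorem stmt15_general {A : Type*} [Fintype A] [DecidableEq A]
    (f c : A → ℝ) (α : ℝ)
    (v : Finset A → ℝ) (hvmono : ∀ S T : Finset A, S ⊆ T → v S ≤ v T)
    (p : Finset A → ℝ) (hp0 : ∀ S, 0 ≤ p S)
    (i : A) (p' : Finset A → ℝ)
    (hp'i : p' {i} = ∑ S ∈ Finset.univ.filter (fun S : Finset A => i ∈ S), p S)
    (hp'0 : ∀ S : Finset A, i ∈ S → S ≠ {i} → p' S = 0)
    (hp'e : ∀ S : Finset A, i ∉ S → p' S = p S) :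
    (∀ j : A, j ≠ i →
      (∑ S ∈ Finset.univ.filter (fun S : Finset A => i ∈ S ∨ j ∈ S), p S) =
      (∑ S ∈ Finset.univ.filter (fun S : Finset A => i ∈ S ∨ j ∈ S), p' S))
    ∧ (∀ j : A,
      (if j = i then α * f i - c i
       else α * f j * (1 - ∑ S ∈ Finset.univ.filter
          (fun S : Finset A => i ∈ S ∨ j ∈ S), p S) - c j) =
      (if j = i then α * f i - c i
       else α * f j * (1 - ∑ S ∈ Finset.univ.filter
          (fun S : Finset A => i ∈ S ∨ j ∈ S), p' S) - c j))
    ∧ ∑ S : Finset A, p' S * v S ≤ ∑ S : Finset A, p S * v S := by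
  have hmem : ∑ S ∈ univ.filter (fun S : Finset A => i ∈ S), p S =
      ∑ S ∈ univ.filter (fun S : Finset A => i ∈ S), p' S := by
    rw [sum_filter_mem_eq_apply_singleton hp'0, hp'i]
  have hor : ∀ j : A, ∑ S ∈ univ.filter (fun S : Finset A => i ∈ S ∨ j ∈ S), p S =
      ∑ S ∈ univ.filter (fun S : Finset A => i ∈ S ∨ j ∈ S), p' S := fun j =>
    sum_filter_or_eq_of_sum_filter_eq univ (fun S => i ∈ S) (fun S => j ∈ S) hmem
      fun S _ hi => (hp'e S hi).symm
  exact ⟨fun j _ => hor j, fun j => by rw [hor j],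
    sum_mul_le_of_collapse (fun S T h => hvmono S T h) hp0 hp'i hp'0 hp'e⟩

theorem stmt15 {A : Type*} [Fintype A] [DecidableEq A]
    (f c : A → ℝ) (α : ℝ)
    (v : Finset A → ℝ) (hvmono : ∀ S T : Finset A, S ⊆ T → v S ≤ v T)
    (p : Finset A → ℝ) (hp0 : ∀ S, 0 ≤ p S) (hp1 : ∑ S : Finset A, p S = 1)
    (i : A) (p' : Finset A → ℝ)
    (hp'i : p' {i} = ∑ S ∈ Finset.univ.filter (fun S : Finset A => i ∈ S), p S)
    (hp'0 : ∀ S : Finset A, i ∈ S → S ≠ {i} → p' S = 0)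
    (hp'e : ∀ S : Finset A, i ∉ S → p' S = p S) :
    (∀ j : A, j ≠ i →
      (∑ S ∈ Finset.univ.filter (fun S : Finset A => i ∈ S ∨ j ∈ S), p S) =
      (∑ S ∈ Finset.univ.filter (fun S : Finset A => i ∈ S ∨ j ∈ S), p' S))
    ∧ (∀ j : A,
      (if j = i then α * f i - c i
       else α * f j * (1 - ∑ S ∈ Finset.univ.filter
          (fun S : Finset A => i ∈ S ∨ j ∈ S), p S) - c j) =
      (if j = i then α * f i - c i
       else α * f j * (1 - ∑ S ∈ Finset.univ.filter
          (fun S : Finset A => i ∈ S ∨ j ∈ S), p' S) - c j))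
    ∧ ∑ S : Finset A, p' S * v S ≤ ∑ S : Finset A, p S * v S :=
  stmt15_general f c α v hvmono p hp0 i p' hp'i hp'0 hp'e
end
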